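/- arXiv:2208.00389 — 4 statements merged into one kernel-verified Lean document; each statement's English description precedes it below -/
import Mathlib

section
/- Let X be a real vector space, ρ an extended seminorm on X, M a complement of the finiteness subspace X_fin^ρ = {x : ρ(x) < ∞} (so X = X_fin^ρ ⊕ M), and μ any seminorm on M. Define ρ'(x) = ρ(x_f) + μ(x_M) where x = x_f + x_M with x_f ∈ X_fin^ρ, x_M ∈ M. Then ρ' is a (real-valued) seminorm on X and ρ' ≤ ρ pointwise (using the convention that ρ(x) = ∞ for x ∉ X_fin^ρ). -/
open scoped ENNReal

/-- given an extended seminorm `ρ`, a complement `M` of its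
finiteness subspace `F`, and a seminorm `μ` on `M`, the function
`ρ'(x_f + x_M) = ρ(x_f) + μ(x_M)` is a real-valued seminorm on `X` with
`ρ' ≤ ρ` pointwise. -/
theorem seminorm_from_decomposition {X : Type*} [AddCommGroup X] [Module ℝ X]
    (ρ : X → ℝ≥0∞)
    (hρsmul : ∀ (α : ℝ) (x : X), ρ (α • x) = (‖α‖₊ : ℝ≥0∞) * ρ x)
    (hρadd : ∀ x y : X, ρ (x + y) ≤ ρ x + ρ y)
    (F M : Submodule ℝ X)
    (hF : (F : Set X) = {x : X | ρ x < ⊤})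
    (hcompl : IsCompl F M)
    (μ : Seminorm ℝ M)
    (ρ' : X → ℝ)
    (hρ' : ∀ (f : F) (m : M), ρ' ((f : X) + (m : X)) = (ρ (f : X)).toReal + μ m) :
    (∀ (α : ℝ) (x : X), ρ' (α • x) = |α| * ρ' x) ∧
    (∀ x y : X, ρ' (x + y) ≤ ρ' x + ρ' y) ∧
    (∀ x : X, ENNReal.ofReal (ρ' x) ≤ ρ x) := by
  have hfin : ∀ f : F, ρ (f : X) < ⊤ := by
    intro f
    have := f.2
    rw [← SetLike.mem_coe, hF] at this
    exact this
  have hdec : ∀ x : X, ∃ (f : F) (m : M), x = (f : X) + (m : X) := by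
    intro x
    obtain ⟨f, m, h, -⟩ := Submodule.existsUnique_add_of_isCompl hcompl x
    exact ⟨f, m, h.symm⟩
  refine ⟨?_, ?_, ?_⟩
  · intro α x
    obtain ⟨f, m, rfl⟩ := hdec x
    have : α • ((f : X) + (m : X)) = ((α • f : F) : X) + ((α • m : M) : X) := by
      simp [smul_add]
    rw [this, hρ']
    rw [show ((α • f : F) : X) = α • (f : X) from rfl, hρsmul]
    rw [ENNReal.toReal_mul, map_smul_eq_mul]
    simp [Real.norm_eq_abs, mul_add]
    rw [hρ' f m]; ring
  · intro x y
    obtain ⟨f1, m1, rfl⟩ := hdec x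
    obtain ⟨f2, m2, rfl⟩ := hdec y
    have h1 : (f1 : X) + (m1 : X) + ((f2 : X) + (m2 : X))
        = ((f1 + f2 : F) : X) + ((m1 + m2 : M) : X) := by
      push_cast; abel
    rw [h1, hρ', hρ', hρ']
    have hsum : (ρ ((f1 + f2 : F) : X)).toReal ≤ (ρ (f1 : X)).toReal + (ρ (f2 : X)).toReal := by
      have := hρadd (f1 : X) (f2 : X)
      rw [show ((f1 + f2 : F) : X) = (f1 : X) + (f2 : X) from rfl]
      calc (ρ ((f1 : X) + (f2 : X))).toReal ≤ (ρ (f1 : X) + ρ (f2 : X)).toReal := by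
            apply ENNReal.toReal_mono _ this
            exact ENNReal.add_ne_top.mpr ⟨(hfin f1).ne, (hfin f2).ne⟩
        _ = (ρ (f1 : X)).toReal + (ρ (f2 : X)).toReal :=
            ENNReal.toReal_add (hfin f1).ne (hfin f2).ne
    have hμ : μ (m1 + m2) ≤ μ m1 + μ m2 := map_add_le_add μ m1 m2
    linarith
  · intro x
    by_cases hx : ρ x < ⊤
    · have hxF : x ∈ F := by rw [← SetLike.mem_coe, hF]; exact hx
      have := hρ' ⟨x, hxF⟩ 0
      simp only [Submodule.coe_zero, add_zero, map_zero] at this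
      rw [this, ENNReal.ofReal_toReal hx.ne]
    · exact le_of_le_of_eq le_top (not_lt.mp hx |> top_le_iff.mp).symm
end

section
/- Let X be a real topological vector space (or more generally a topological additive group with continuous scalar action on lines). Let ρ be an extended seminorm on X with finiteness subspace X_fin^ρ = {x : ρ(x) < ∞}, let M be a complement of X_fin^ρ with basis (b_j)_{j∈J}, and define ρ'(x) = ρ(x_f) + Σ_j |α_j| where x = x_f + Σ_j α_j b_j with x_f ∈ X_fin^ρ. Then ρ' is a seminorm on X, ρ' ≤ ρ, and ρ'(x) = 0 implies ρ(x) = 0. -/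
open scoped ENNReal

/-- key step: with `M` a complement of the finiteness subspace
of an extended seminorm `ρ`, `b` a basis of `M`, and
`ρ'(x_f + x_M) = ρ(x_f) + Σ_j |α_j|` where `x_M = Σ_j α_j b_j`, the function
`ρ'` is a seminorm, `ρ' ≤ ρ`, and `ρ' x = 0` implies `ρ x = 0`. -/
theorem seminorm_from_basis_decomposition {X : Type*} [AddCommGroup X]
    [Module ℝ X]
    (ρ : X → ℝ≥0∞)
    (hρsmul : ∀ (α : ℝ) (x : X), ρ (α • x) = (‖α‖₊ : ℝ≥0∞) * ρ x)
    (hρadd : ∀ x y : X, ρ (x + y) ≤ ρ x + ρ y)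
    (F M : Submodule ℝ X)
    (hF : (F : Set X) = {x : X | ρ x < ⊤})
    (hcompl : IsCompl F M)
    {J : Type*} (b : Module.Basis J ℝ M)
    (ρ' : X → ℝ)
    (hρ' : ∀ (f : F) (m : M),
      ρ' ((f : X) + (m : X)) =
        (ρ (f : X)).toReal + ∑ j ∈ (b.repr m).support, |b.repr m j|) :
    (∀ (α : ℝ) (x : X), ρ' (α • x) = |α| * ρ' x) ∧
    (∀ x y : X, ρ' (x + y) ≤ ρ' x + ρ' y) ∧
    (∀ x : X, ENNReal.ofReal (ρ' x) ≤ ρ x) ∧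
    (∀ x : X, ρ' x = 0 → ρ x = 0) := by
  classical
  set πF : X →ₗ[ℝ] F := F.linearProjOfIsCompl M hcompl with hπF
  set πM : X →ₗ[ℝ] M := M.linearProjOfIsCompl F hcompl.symm with hπM
  have hdecomp : ∀ x : X, ((πF x : X) + (πM x : X)) = x := fun x =>
    Submodule.projection_add_projection_eq_self hcompl x
  -- the ℓ¹ "norm" on finitely supported functions
  set S : (J →₀ ℝ) → ℝ := fun c => ∑ j ∈ c.support, |c j| with hS
  have hSnonneg : ∀ c, 0 ≤ S c := fun c =>
    Finset.sum_nonneg fun j _ => abs_nonneg _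
  have hSsubset : ∀ (c : J →₀ ℝ) (s : Finset J), c.support ⊆ s →
      S c = ∑ j ∈ s, |c j| := by
    intro c s hs
    refine Finset.sum_subset hs ?_
    intro j _ hj
    simp [Finsupp.notMem_support_iff.mp hj]
  have hSadd : ∀ c c' : J →₀ ℝ, S (c + c') ≤ S c + S c' := by
    intro c c'
    have h1 : S (c + c') = ∑ j ∈ c.support ∪ c'.support, |c j + c' j| := by
      rw [hSsubset (c + c') _ (Finsupp.support_add)]
      simp
    rw [h1, hSsubset c (c.support ∪ c'.support) Finset.subset_union_left,
      hSsubset c' (c.support ∪ c'.support) Finset.subset_union_right,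
      ← Finset.sum_add_distrib]
    exact Finset.sum_le_sum fun j _ => abs_add_le _ _
  have hSsmul : ∀ (α : ℝ) (c : J →₀ ℝ), S (α • c) = |α| * S c := by
    intro α c
    rcases eq_or_ne α 0 with rfl | hα
    · simp [hS]
    · rw [hS]
      simp only [Finsupp.support_smul_eq hα, Finsupp.smul_apply, smul_eq_mul,
        abs_mul]
      rw [Finset.mul_sum]
  have hSzero : ∀ c : J →₀ ℝ, S c = 0 → c = 0 := by
    intro c hc
    ext j
    by_contra hj
    have hjmem : j ∈ c.support := Finsupp.mem_support_iff.mpr (by simpa using hj)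
    have : |c j| = 0 :=
      (Finset.sum_eq_zero_iff_of_nonneg fun i _ => abs_nonneg (c i)).mp hc j hjmem
    simp_all
  have hfin : ∀ f : F, ρ (f : X) ≠ ⊤ := by
    intro f
    have : (f : X) ∈ (F : Set X) := f.2
    rw [hF] at this
    exact this.ne
  have key : ∀ x : X, ρ' x = (ρ (πF x : X)).toReal + S (b.repr (πM x)) := by
    intro x
    conv_lhs => rw [← hdecomp x]
    exact hρ' _ _
  refine ⟨?_, ?_, ?_, ?_⟩
  · intro α x
    rw [key, key, map_smul, map_smul, map_smul, hSsmul]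
    push_cast
    rw [hρsmul, ENNReal.toReal_mul, mul_add]
    simp [Real.norm_eq_abs]
  · intro x y
    rw [key, key, key, map_add, map_add, map_add]
    have h1 : (ρ ((πF x : X) + (πF y : X))).toReal ≤
        (ρ (πF x : X)).toReal + (ρ (πF y : X)).toReal := by
      rw [← ENNReal.toReal_add (hfin _) (hfin _)]
      exact ENNReal.toReal_mono
        (by simp [ENNReal.add_ne_top, hfin (πF x), hfin (πF y)]) (hρadd _ _)
    have h2 := hSadd (b.repr (πM x)) (b.repr (πM y))
    push_cast
    linarith
  · intro x
    rcases eq_or_ne (πM x) 0 with hm | hm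
    · have hx : x = (πF x : X) := by
        conv_lhs => rw [← hdecomp x]
        simp [hm]
      rw [key, hm]
      simp only [map_zero]
      rw [← hx]
      simpa [hS] using ENNReal.ofReal_toReal_le
    · -- then x ∉ F, so ρ x = ⊤
      have hxF : x ∉ F := by
        intro hx
        apply hm
        rw [hπM]
        exact Submodule.linearProjOfIsCompl_apply_right' hcompl.symm hx
      have : ρ x = ⊤ := by
        by_contra h
        exact hxF (by rw [← SetLike.mem_coe, hF]; exact lt_top_iff_ne_top.mpr h)
      simp [this]
  · intro x hx
    rw [key] at hx
    have h1 : (ρ (πF x : X)).toReal = 0 ∧ S (b.repr (πM x)) = 0 := by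
      have ha : (0:ℝ) ≤ (ρ (πF x : X)).toReal := ENNReal.toReal_nonneg
      have hb := hSnonneg (b.repr (πM x))
      constructor <;> linarith
    have hm : πM x = 0 := by
      have := hSzero _ h1.2
      exact b.repr.injective (by simpa using this)
    have hxF : x = (πF x : X) := by
      conv_lhs => rw [← hdecomp x]
      simp [hm]
    rw [hxF]
    have := h1.1
    rwa [ENNReal.toReal_eq_zero_iff, or_iff_left (hfin (πF x))] at this
end

section
/- Let ρ be an extended seminorm on a real vector space X such that ρ(x) ≠ 0 for some given x ≠ 0. Then there exists a (real-valued) seminorm ρ' on X with ρ' ≤ ρ pointwise and ρ'(x) ≠ 0. -/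
open scoped ENNReal

/-- if `ρ` is an extended seminorm and `ρ x ≠ 0` for some
`x ≠ 0`, then there is a real-valued seminorm `ρ' ≤ ρ` with `ρ' x ≠ 0`. -/
theorem exists_seminorm_le_of_ne_zero {X : Type*} [AddCommGroup X] [Module ℝ X]
    (ρ : X → ℝ≥0∞)
    (hρsmul : ∀ (α : ℝ) (y : X), ρ (α • y) = (‖α‖₊ : ℝ≥0∞) * ρ y)
    (hρadd : ∀ y z : X, ρ (y + z) ≤ ρ y + ρ z)
    (x : X) (hx : x ≠ 0) (hρx : ρ x ≠ 0) :
    ∃ ρ' : X → ℝ,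
      (∀ (α : ℝ) (y : X), ρ' (α • y) = |α| * ρ' y) ∧
      (∀ y z : X, ρ' (y + z) ≤ ρ' y + ρ' z) ∧
      (∀ y : X, ENNReal.ofReal (ρ' y) ≤ ρ y) ∧
      ρ' x ≠ 0 := by
  have hρ0 : ρ 0 = 0 := by
    have := hρsmul 0 0
    simpa using this
  -- the subspace of finiteness
  set D : Submodule ℝ X :=
    { carrier := {y | ρ y < ⊤}
      add_mem' := by
        intro a b ha hb
        exact lt_of_le_of_lt (hρadd a b) (ENNReal.add_lt_top.2 ⟨ha, hb⟩)
      zero_mem' := by simp [Set.mem_setOf_eq, hρ0]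
      smul_mem' := by
        intro c y hy
        simp only [Set.mem_setOf_eq] at hy ⊢
        rw [hρsmul]
        exact ENNReal.mul_lt_top ENNReal.coe_lt_top hy } with hD
  have hmemD : ∀ y : X, y ∈ D ↔ ρ y < ⊤ := fun y => Iff.rfl
  -- It suffices to find a linear functional F with |F| ≤ ρ and F x ≠ 0
  suffices h : ∃ F : X →ₗ[ℝ] ℝ, (∀ y : X, ENNReal.ofReal |F y| ≤ ρ y) ∧ F x ≠ 0 by
    obtain ⟨F, hFle, hFx⟩ := h
    refine ⟨fun y => |F y|, ?_, ?_, hFle, by simpa using hFx⟩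
    · intro α y
      show |F (α • y)| = |α| * |F y|
      rw [map_smul, smul_eq_mul, abs_mul]
    · intro y z
      show |F (y + z)| ≤ |F y| + |F z|
      rw [map_add]
      exact abs_add_le _ _
  by_cases hfin : ρ x < ⊤
  · -- finite case: Hahn-Banach on D with sublinear functional (ρ ·).toReal
    have hxD : x ∈ D := hfin
    set x' : D := ⟨x, hxD⟩ with hx'
    have hx'0 : x' ≠ 0 := by
      simp only [hx', ne_eq, Submodule.mk_eq_zero]
      exact hx
    set t : ℝ := (ρ x).toReal with ht
    have ht0 : 0 < t := ENNReal.toReal_pos hρx hfin.ne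
    set N : D → ℝ := fun d => (ρ (d : X)).toReal with hN
    have hNnn : ∀ d : D, 0 ≤ N d := fun d => ENNReal.toReal_nonneg
    have hNsmul : ∀ (c : ℝ) (d : D), N (c • d) = |c| * N d := by
      intro c d
      simp only [hN, Submodule.coe_smul, hρsmul, ENNReal.toReal_mul, ENNReal.coe_toReal,
        coe_nnnorm, Real.norm_eq_abs]
    have hNadd : ∀ d e : D, N (d + e) ≤ N d + N e := by
      intro d e
      have hd : ρ (d : X) ≠ ⊤ := d.2.ne
      have he : ρ (e : X) ≠ ⊤ := e.2.ne
      calc N (d + e) = (ρ ((d : X) + e)).toReal := rfl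
        _ ≤ (ρ (d : X) + ρ (e : X)).toReal :=
            ENNReal.toReal_mono (by finiteness) (hρadd _ _)
        _ = N d + N e := ENNReal.toReal_add hd he
    -- partial functional on span of x'
    have hker : ∀ c : ℝ, c • x' = 0 → c • t = 0 := by
      intro c hc
      rcases smul_eq_zero.1 hc with h | h
      · simp [h]
      · exact absurd h hx'0
    set f : D →ₗ.[ℝ] ℝ := LinearPMap.mkSpanSingleton' x' t hker with hf
    have hfle : ∀ z : f.domain, f z ≤ N z := by
      rintro ⟨z, hz⟩
      rw [hf, LinearPMap.domain_mkSpanSingleton] at hz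
      rcases Submodule.mem_span_singleton.1 hz with ⟨c, rfl⟩
      have : f ⟨c • x', hz⟩ = c • t := LinearPMap.mkSpanSingleton'_apply x' t hker c hz
      rw [this, hNsmul]
      have hNx : N x' = t := rfl
      rw [hNx, smul_eq_mul]
      exact mul_le_mul_of_nonneg_right (le_abs_self c) ht0.le
    obtain ⟨g, hgf, hgle⟩ := exists_extension_of_le_sublinear f N
      (fun c hc d => by rw [hNsmul, abs_of_pos hc]) hNadd hfle
    have hgabs : ∀ d : D, |g d| ≤ N d := by
      intro d
      rcases abs_cases (g d) with ⟨h1, _⟩ | ⟨h1, _⟩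
      · rw [h1]; exact hgle d
      · rw [h1]
        have h2 := hgle (-d)
        have h3 : N (-d) = N d := by
          have := hNsmul (-1) d
          simpa using this
        rw [map_neg, h3] at h2
        exact h2
    -- extend g to all of X
    obtain ⟨G, hG⟩ := LinearMap.exists_extend g
    refine ⟨G, ?_, ?_⟩
    · intro y
      by_cases hy : y ∈ D
      · have hGy : G y = g ⟨y, hy⟩ := by
          simpa using LinearMap.congr_fun hG ⟨y, hy⟩
        rw [hGy]
        calc ENNReal.ofReal |g ⟨y, hy⟩| ≤ ENNReal.ofReal (N ⟨y, hy⟩) :=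
              ENNReal.ofReal_le_ofReal (hgabs _)
          _ = ρ y := ENNReal.ofReal_toReal hy.ne
      · have : ρ y = ⊤ := by
          by_contra h
          exact hy (lt_top_iff_ne_top.2 h)
        simp [this]
    · have hGx : G x = g x' := by
        simpa using LinearMap.congr_fun hG x'
      have hgx : g x' = t := by
        have hmem : (x' : D) ∈ f.domain := by
          rw [hf, LinearPMap.domain_mkSpanSingleton]
          exact Submodule.mem_span_singleton_self x'
        have := hgf ⟨x', hmem⟩
        rw [this]
        exact LinearPMap.mkSpanSingleton'_apply_self x' t hker hmem
      rw [hGx, hgx]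
      exact ht0.ne'
  · -- infinite case: a functional vanishing on D with F x = 1
    have hxD : x ∉ D := fun h => hfin h
    set P : X →ₗ.[ℝ] ℝ := LinearPMap.supSpanSingleton (⟨D, 0⟩ : X →ₗ.[ℝ] ℝ) x 1 hxD with hP
    obtain ⟨G, hG⟩ := P.toFun.exists_extend
    have key : ∀ (y : X) (hy : y ∈ D) (c : ℝ), G (y + c • x) = c := by
      intro y hy c
      have hm : y + c • x ∈ P.domain := by
        rw [hP, LinearPMap.domain_supSpanSingleton]
        exact Submodule.add_mem_sup hy
          (Submodule.smul_mem _ _ (Submodule.mem_span_singleton_self x))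
      have h0 : P ⟨y + c • x, hm⟩
          = (⟨D, 0⟩ : X →ₗ.[ℝ] ℝ) ⟨y, hy⟩ + c • 1 :=
        LinearPMap.supSpanSingleton_apply_mk (⟨D, 0⟩ : X →ₗ.[ℝ] ℝ) x 1 hxD y hy c
      have hGy := LinearMap.congr_fun hG ⟨y + c • x, hm⟩
      rw [LinearPMap.toFun_eq_coe, h0] at hGy
      simp only [LinearMap.coe_comp, Function.comp_apply, Submodule.coe_subtype] at hGy
      simp only [LinearPMap.mk_apply, LinearMap.zero_apply, zero_add, smul_eq_mul,
        mul_one] at hGy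
      exact hGy
    refine ⟨G, ?_, ?_⟩
    · intro y
      by_cases hy : y ∈ D
      · have := key y hy 0
        simp only [zero_smul, add_zero] at this
        rw [this]
        simp
      · have : ρ y = ⊤ := by
          by_contra h
          exact hy (lt_top_iff_ne_top.2 h)
        simp [this]
    · have := key 0 D.zero_mem 1
      simp only [zero_add, one_smul] at this
      rw [this]
      exact one_ne_zero
end

section
/- Let X be a real vector space with an extended seminorm ρ, and let A ⊆ X be absolutely convex and bounded in the sense that for every ε > 0 there exist c > 0 and a finite set P ⊆ A with A ⊆ P + c·{x : ρ(x) < ε}. Then A ⊆ X_fin^ρ = {x : ρ(x) < ∞}. -/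
open scoped ENNReal Pointwise

/-! If `ρ x = ∞`, the points `t • x` with `t ∈ [0, 1]` lie in `A` by balancedness, and any two of
them are at `ρ`-distance `|s - t| * ∞ = ∞`. A cover of `A` by finitely many translates `p + c • S`
of a set `S` of `ρ`-finite vectors puts two of these infinitely many points in the same translate,
and then their difference `c • (y - y')` has finite `ρ`. -/

section ExtendedSeminorm

variable {X : Type*} [AddCommGroup X] [Module ℝ X] {ρ : X → ℝ≥0∞}

theorem rho_sub_le (hρsmul : ∀ (α : ℝ) (x : X), ρ (α • x) = (‖α‖₊ : ℝ≥0∞) * ρ x)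
    (hρadd : ∀ x y : X, ρ (x + y) ≤ ρ x + ρ y) (x y : X) : ρ (x - y) ≤ ρ x + ρ y := by
  have hneg : ρ (-y) = ρ y := by simpa using hρsmul (-1) y
  simpa only [sub_eq_add_neg, hneg] using hρadd x (-y)

theorem rho_smul_sub_smul (hρsmul : ∀ (α : ℝ) (x : X), ρ (α • x) = (‖α‖₊ : ℝ≥0∞) * ρ x)
    (s t : ℝ) (x : X) : ρ (s • x - t • x) = ‖s - t‖₊ * ρ x := by
  rw [← sub_smul, hρsmul]

theorem exists_ne_rho_sub_lt_top_of_mem_finite_add_smul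
    (hρsmul : ∀ (α : ℝ) (x : X), ρ (α • x) = (‖α‖₊ : ℝ≥0∞) * ρ x)
    (hρadd : ∀ x y : X, ρ (x + y) ≤ ρ x + ρ y)
    {ι : Type*} [Infinite ι] {P S : Set X} (hP : P.Finite) (hS : ∀ y ∈ S, ρ y < ⊤) (c : ℝ)
    {f : ι → X} (hf : ∀ i, f i ∈ P + c • S) : ∃ i j, i ≠ j ∧ ρ (f i - f j) < ⊤ := by
  have hdecomp (i : ι) : ∃ p ∈ P, ∃ y ∈ S, p + c • y = f i := by
    obtain ⟨p, hp, _, ⟨y, hy, rfl⟩, hpy⟩ := hf i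
    exact ⟨p, hp, y, hy, hpy⟩
  choose p hp y hy hfy using hdecomp
  have : Finite P := hP.to_subtype
  obtain ⟨i, j, hij, hpij⟩ :=
    Finite.exists_ne_map_eq_of_infinite fun i => (⟨p i, hp i⟩ : P)
  rw [Subtype.mk.injEq] at hpij
  have hdiff : f i - f j = c • (y i - y j) := by
    rw [← hfy i, ← hfy j, hpij, smul_sub]
    abel
  refine ⟨i, j, hij, ?_⟩
  calc ρ (f i - f j) = ‖c‖₊ * ρ (y i - y j) := by rw [hdiff, hρsmul]
    _ ≤ ‖c‖₊ * (ρ (y i) + ρ (y j)) := by gcongr; exact rho_sub_le hρsmul hρadd _ _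
    _ < ⊤ := ENNReal.mul_lt_top ENNReal.coe_lt_top
      (ENNReal.add_lt_top.mpr ⟨hS _ (hy i), hS _ (hy j)⟩)

end ExtendedSeminorm

theorem absolutely_convex_bounded_subset_fin_general {X : Type*} [AddCommGroup X]
    [Module ℝ X]
    (ρ : X → ℝ≥0∞)
    (hρsmul : ∀ (α : ℝ) (x : X), ρ (α • x) = (‖α‖₊ : ℝ≥0∞) * ρ x)
    (hρadd : ∀ x y : X, ρ (x + y) ≤ ρ x + ρ y)
    (A : Set X) (hbal : Balanced ℝ A)
    (hbdd : ∀ ε : ℝ, 0 < ε → ∃ c : ℝ, 0 < c ∧ ∃ P : Finset X,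
      (P : Set X) ⊆ A ∧
      A ⊆ (P : Set X) + c • {x : X | ρ x < ENNReal.ofReal ε}) :
    A ⊆ {x : X | ρ x < ⊤} := by
  intro x hxA
  by_contra hx
  replace hx : ρ x = ⊤ := not_lt_top_iff.mp hx
  obtain ⟨c, -, P, -, hcover⟩ := hbdd 1 one_pos
  have : Infinite (Set.Icc (0 : ℝ) 1) := (Set.Icc_infinite zero_lt_one).to_subtype
  have hsegment (t : Set.Icc (0 : ℝ) 1) : (t : ℝ) • x ∈ A :=
    hbal.smul_mem (by simpa [abs_of_nonneg t.2.1] using t.2.2) hxA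
  obtain ⟨s, t, hst, hfin⟩ := exists_ne_rho_sub_lt_top_of_mem_finite_add_smul hρsmul hρadd
    P.finite_toSet (fun y hy => hy.trans ENNReal.ofReal_lt_top) c
    (fun t => hcover (hsegment t))
  rw [rho_smul_sub_smul hρsmul, hx, ENNReal.mul_top] at hfin
  · exact hfin.ne rfl
  · simpa [sub_eq_zero, Subtype.ext_iff] using hst

/-- an absolutely convex set that is bounded for an extended
seminorm `ρ` is contained in the finiteness subspace of `ρ`. -/
theorem absolutely_convex_bounded_subset_fin {X : Type*} [AddCommGroup X]
    [Module ℝ X]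
    (ρ : X → ℝ≥0∞)
    (hρsmul : ∀ (α : ℝ) (x : X), ρ (α • x) = (‖α‖₊ : ℝ≥0∞) * ρ x)
    (hρadd : ∀ x y : X, ρ (x + y) ≤ ρ x + ρ y)
    (A : Set X) (hbal : Balanced ℝ A) (hconv : Convex ℝ A)
    (hbdd : ∀ ε : ℝ, 0 < ε → ∃ c : ℝ, 0 < c ∧ ∃ P : Finset X,
      (P : Set X) ⊆ A ∧
      A ⊆ (P : Set X) + c • {x : X | ρ x < ENNReal.ofReal ε}) :
    A ⊆ {x : X | ρ x < ⊤} :=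
  absolutely_convex_bounded_subset_fin_general ρ hρsmul hρadd A hbal hbdd
end
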